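/- Let n ≥ 3 be an odd integer and m ≥ 2 an even integer. Then the corona graph P_n ∘ P_m admits an edge labeling f* : E(P_n ∘ P_m) → {0,1} whose induced vertex labeling f satisfies e_f(0) = n·m − 1, e_f(1) = n·m, v_f(0) = (n·m + n + 1)/2, and v_f(1) = (n + n·m − 1)/2. In particular |(v_f(0) + e_f(0)) − (v_f(1) + e_f(1))| ≤ 1, so P_n ∘ P_m is total edge product cordial for odd n ≥ 3 and even m. -/

import Mathlib

/-
Write `n = 2k + 1` and `m = 2h`, and let `U` consist of the path vertices `i ≥ k` and the copy
vertices `(i, x)` with `(i, x) ≥ (k, h)` lexicographically. Label an edge `0` exactly when both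
of its ends lie in `U`. Every vertex of `U` has a neighbour in `U` (the copy vertex `(i, x)` its
path vertex `i`, the path vertex `i` its copy vertex `(i, h)`), so the induced vertex label is `0`
exactly on `U`. Hence `v_f(0) = |U| = (k + 1) + km + h`, and `e_f(0)`, the number of edges inside
`U`, is `k + (km + h) + (k(m - 1) + h - 1) = nm - 1` (path edges, spokes, edges of the copies);
`v_f(1)` and `e_f(1)` are the complementary counts.
-/

open scoped Classical
open Finset SimpleGraph

/-- Adjacency relation of the corona product `G ∘ H`: take one copy of `G` and,
for each vertex `i` of `G`, a copy of `H` (indexed by `i`), joining `i` to every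
vertex of its copy of `H`. -/
def coronaAdj {α β : Type*} (G : SimpleGraph α) (H : SimpleGraph β) :
    α ⊕ α × β → α ⊕ α × β → Prop
  | Sum.inl u, Sum.inl v => G.Adj u v
  | Sum.inl u, Sum.inr (i, _) => u = i
  | Sum.inr (i, _), Sum.inl u => u = i
  | Sum.inr (i, x), Sum.inr (j, y) => i = j ∧ H.Adj x y

/-- The corona product `G ∘ H` of two simple graphs. -/
def corona {α β : Type*} (G : SimpleGraph α) (H : SimpleGraph β) :
    SimpleGraph (α ⊕ α × β) where
  Adj := coronaAdj G H
  symm := by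
    refine ⟨?_⟩
    rintro (u | ⟨i, x⟩) (v | ⟨j, y⟩) h <;>
      simp only [coronaAdj] at h ⊢
    · exact h.symm
    · exact h
    · exact h
    · exact ⟨h.1.symm, h.2.symm⟩
  loopless := by
    refine ⟨?_⟩
    rintro (u | ⟨i, x⟩) h <;> simp only [coronaAdj] at h
    · exact G.irrefl h
    · exact H.irrefl h.2

/-- The vertex labeling induced by an edge labeling `f`: the label of `v` is the
product of the labels of the edges incident to `v` (an empty product is `1`). -/
noncomputable def inducedLabel {α : Type*} [Fintype α] (G : SimpleGraph α)
    (f : Sym2 α → ℕ) (v : α) : ℕ :=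
  ∏ u ∈ Finset.univ.filter (fun u => G.Adj v u), f s(v, u)

/-- `eCount G f i` is the number of edges of `G` labeled `i` by `f`. -/
noncomputable def eCount {α : Type*} [Fintype α] (G : SimpleGraph α)
    (f : Sym2 α → ℕ) (i : ℕ) : ℕ :=
  (G.edgeFinset.filter (fun e => f e = i)).card

/-- `vCount G f i` is the number of vertices of `G` whose induced label is `i`. -/
noncomputable def vCount {α : Type*} [Fintype α] (G : SimpleGraph α)
    (f : Sym2 α → ℕ) (i : ℕ) : ℕ :=
  (Finset.univ.filter (fun v => inducedLabel G f v = i)).card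

/-- `f` is a total edge product cordial labeling of `G`: it labels every edge `0` or `1`,
and `|(v_f(0) + e_f(0)) - (v_f(1) + e_f(1))| ≤ 1`. -/
def IsTotalEdgeProductCordialLabeling {α : Type*} [Fintype α] (G : SimpleGraph α)
    (f : Sym2 α → ℕ) : Prop :=
  (∀ e ∈ G.edgeSet, f e = 0 ∨ f e = 1) ∧
  |((vCount G f 0 : ℤ) + (eCount G f 0 : ℤ)) - ((vCount G f 1 : ℤ) + (eCount G f 1 : ℤ))| ≤ 1

/-- `G` is total edge product cordial if it admits a total edge product cordial labeling. -/
def IsTotalEdgeProductCordial {α : Type*} [Fintype α] (G : SimpleGraph α) : Prop :=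
  ∃ f : Sym2 α → ℕ, IsTotalEdgeProductCordialLabeling G f

lemma card_filter_eq_zero_add_card_filter_eq_one {ι : Type*} (s : Finset ι) (g : ι → ℕ)
    (hg : ∀ x ∈ s, g x = 0 ∨ g x = 1) :
    #{x ∈ s | g x = 0} + #{x ∈ s | g x = 1} = #s := by
  rw [← card_filter_add_card_filter_not (s := s) (fun x => g x = 0)]
  congr 2
  refine filter_congr fun x hx => ?_
  rcases hg x hx with h | h <;> simp [h]

lemma card_filter_product_lex {ι κ : Type*} [DecidableEq ι] (s : Finset ι) (t : Finset κ)
    (P : ι → Prop) [DecidablePred P] (Q : κ → Prop) [DecidablePred Q] {a : ι} (ha : a ∈ s)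
    (hPa : ¬ P a) :
    #{q ∈ s ×ˢ t | P q.1 ∨ (q.1 = a ∧ Q q.2)} = #{i ∈ s | P i} * #t + #{y ∈ t | Q y} := by
  rw [filter_or, card_union_of_disjoint, filter_product_left, filter_product (p := (· = a)),
    filter_eq', if_pos ha, card_product, card_product, card_singleton, one_mul]
  exact disjoint_filter.mpr fun q _ hq ⟨h, _⟩ => hPa (h ▸ hq)

lemma Fin.card_filter_le_val (N c : ℕ) : #{i : Fin N | c ≤ (i : ℕ)} = N - c := by
  have := card_filter_add_card_filter_not (s := (univ : Finset (Fin N)))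
    fun i => (i : ℕ) < c
  simp only [Fin.card_filter_val_lt, not_lt, card_univ, Fintype.card_fin] at this
  omega

lemma edgeFinset_pathGraph_succ (M : ℕ) :
    (pathGraph (M + 1)).edgeFinset = univ.image fun i : Fin M => s(i.castSucc, i.succ) := by
  ext e
  induction e using Sym2.ind with
  | _ u v =>
    simp only [mem_edgeFinset, mem_edgeSet, pathGraph_adj, mem_image, mem_univ, true_and,
      Sym2.eq_iff, Fin.ext_iff, Fin.val_castSucc, Fin.val_succ]
    constructor
    · rintro (h | h)
      · exact ⟨⟨u, by omega⟩, Or.inl ⟨rfl, h⟩⟩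
      · exact ⟨⟨v, by omega⟩, Or.inr ⟨rfl, h⟩⟩
    · rintro ⟨i, ⟨h₁, h₂⟩ | ⟨h₁, h₂⟩⟩ <;> omega

lemma card_filter_edgeFinset_pathGraph {N : ℕ} (c : Fin N)
    [DecidablePred fun e : Sym2 (Fin N) => ∀ v ∈ e, c ≤ v] :
    #{e ∈ (pathGraph N).edgeFinset | ∀ v ∈ e, c ≤ v} = N - 1 - c := by
  obtain ⟨M, rfl⟩ : ∃ M, N = M + 1 := Nat.exists_eq_add_one.mpr c.pos
  have hinj : Function.Injective fun i : Fin M => s(i.castSucc, i.succ) := fun i j h => by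
    rw [Sym2.eq_iff] at h
    simp only [Fin.ext_iff, Fin.val_castSucc, Fin.val_succ] at h ⊢
    omega
  rw [edgeFinset_pathGraph_succ, filter_image, card_image_of_injective _ hinj]
  simp only [Sym2.mem_iff, forall_eq_or_imp, forall_eq]
  rw [Nat.add_sub_cancel, ← Fin.card_filter_le_val M c]
  congr 1
  refine filter_congr fun i _ => ?_
  simp only [Fin.le_def, Fin.val_castSucc, Fin.val_succ]
  omega

lemma card_edgeFinset_pathGraph (N : ℕ) : #(pathGraph N).edgeFinset = N - 1 := by
  rcases N with _ | M
  · exact card_eq_zero.mpr (eq_empty_of_isEmpty _)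
  · simpa using card_filter_edgeFinset_pathGraph (0 : Fin (M + 1))

section Corona

variable {α β : Type*} [Fintype α] [Fintype β] (G : SimpleGraph α) (H : SimpleGraph β)

lemma edgeFinset_corona : (corona G H).edgeFinset =
    G.edgeFinset.image (Sym2.map Sum.inl) ∪
      univ.image (fun q : α × β => s(Sum.inl q.1, Sum.inr q)) ∪
      (univ ×ˢ H.edgeFinset).image (fun q => q.2.map fun x => Sum.inr (q.1, x)) := by
  ext e
  simp only [mem_union, mem_image, mem_product, mem_univ, true_and, mem_edgeFinset]
  constructor
  · induction e using Sym2.ind with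
    | _ u v =>
      rcases u with i | ⟨i, x⟩ <;> rcases v with j | ⟨j, y⟩ <;> intro h <;>
        simp only [mem_edgeSet, corona, coronaAdj] at h
      · exact Or.inl (Or.inl ⟨s(i, j), h, rfl⟩)
      · exact Or.inl (Or.inr ⟨(j, y), by rw [h]⟩)
      · exact Or.inl (Or.inr ⟨(i, x), by rw [h, Sym2.eq_swap]⟩)
      · obtain ⟨rfl, h⟩ := h
        exact Or.inr ⟨(i, s(x, y)), h, rfl⟩
  · rintro ((⟨e, he, rfl⟩ | ⟨q, rfl⟩) | ⟨⟨i, e⟩, he, rfl⟩)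
    · induction e using Sym2.ind
      simpa [corona, coronaAdj] using he
    · simp [corona, coronaAdj]
    · induction e using Sym2.ind
      simpa [corona, coronaAdj] using he

lemma card_filter_edgeFinset_corona (p : Sym2 (α ⊕ α × β) → Prop) [DecidablePred p] :
    #{e ∈ (corona G H).edgeFinset | p e} =
      #{e ∈ G.edgeFinset | p (e.map Sum.inl)} + #{q : α × β | p s(Sum.inl q.1, Sum.inr q)} +
        #{q ∈ univ ×ˢ H.edgeFinset | p (q.2.map fun x => Sum.inr (q.1, x))} := by
  have hinl : Function.Injective (Sym2.map (Sum.inl : α → α ⊕ α × β)) :=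
    Sym2.map.injective Sum.inl_injective
  have hspoke : Function.Injective fun q : α × β => s(Sum.inl q.1, Sum.inr q) :=
    fun q r h => (by simpa using h : q.1 = r.1 ∧ q = r).2
  have hcopy : Function.Injective fun q : α × Sym2 β =>
      q.2.map fun x => (Sum.inr (q.1, x) : α ⊕ α × β) := by
    rintro ⟨i, e⟩ ⟨j, e'⟩ h
    induction e using Sym2.ind
    induction e' using Sym2.ind
    simp only [Sym2.map_mk, Sym2.eq, Sym2.rel_iff', Prod.mk.injEq, Sum.inr.injEq] at h
    aesop
  rw [edgeFinset_corona, filter_union, filter_union, card_union_of_disjoint,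
    card_union_of_disjoint, filter_image, filter_image, filter_image, card_image_of_injective _ hinl,
    card_image_of_injective _ hspoke, card_image_of_injective _ hcopy]
  · exact disjoint_filter_filter <| disjoint_left.mpr <| by
      simp only [mem_image]
      rintro _ ⟨e, -, rfl⟩ ⟨q, -, h⟩
      induction e using Sym2.ind
      simp at h
  · refine disjoint_union_left.mpr ⟨disjoint_filter_filter ?_, disjoint_filter_filter ?_⟩ <;>
      refine disjoint_left.mpr ?_ <;> simp only [mem_image]
    · rintro _ ⟨e, -, rfl⟩ ⟨⟨i, e'⟩, -, h⟩
      induction e using Sym2.ind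
      induction e' using Sym2.ind
      simp at h
    · rintro _ ⟨q, -, rfl⟩ ⟨⟨i, e'⟩, -, h⟩
      induction e' using Sym2.ind
      simp at h

lemma card_edgeFinset_corona :
    #(corona G H).edgeFinset =
      #G.edgeFinset + Fintype.card α * Fintype.card β + Fintype.card α * #H.edgeFinset := by
  simpa [card_product] using card_filter_edgeFinset_corona G H fun _ => True

end Corona

section InsideZeroLabeling

variable {V : Type*} [Fintype V] [DecidableEq V] (G : SimpleGraph V) (U : Finset V)

def insideZeroLabeling (e : Sym2 V) : ℕ := if ∀ v ∈ e, v ∈ U then 0 else 1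

lemma insideZeroLabeling_eq_zero_or_one (e : Sym2 V) :
    insideZeroLabeling U e = 0 ∨ insideZeroLabeling U e = 1 := by
  unfold insideZeroLabeling; split <;> simp

lemma eCount_zero_insideZeroLabeling :
    eCount G (insideZeroLabeling U) 0 = #{e ∈ G.edgeFinset | ∀ v ∈ e, v ∈ U} := by
  simp [eCount, insideZeroLabeling]

lemma eCount_zero_add_eCount_one_insideZeroLabeling :
    eCount G (insideZeroLabeling U) 0 + eCount G (insideZeroLabeling U) 1 = #G.edgeFinset :=
  card_filter_eq_zero_add_card_filter_eq_one _ _ fun e _ => insideZeroLabeling_eq_zero_or_one U e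

variable {G U}

lemma inducedLabel_insideZeroLabeling (hU : ∀ v ∈ U, ∃ u ∈ U, G.Adj v u) (v : V) :
    inducedLabel G (insideZeroLabeling U) v = if v ∈ U then 0 else 1 := by
  simp only [inducedLabel, insideZeroLabeling, Sym2.mem_iff, forall_eq_or_imp, forall_eq]
  split_ifs with hv
  · obtain ⟨u, hu, hvu⟩ := hU v hv
    exact prod_eq_zero (i := u) (by simpa using hvu) (by simp [hv, hu])
  · exact prod_eq_one fun u _ => by simp [hv]

lemma vCount_zero_insideZeroLabeling (hU : ∀ v ∈ U, ∃ u ∈ U, G.Adj v u) :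
    vCount G (insideZeroLabeling U) 0 = #U := by
  simp [vCount, inducedLabel_insideZeroLabeling hU]

lemma vCount_one_insideZeroLabeling (hU : ∀ v ∈ U, ∃ u ∈ U, G.Adj v u) :
    vCount G (insideZeroLabeling U) 1 = Fintype.card V - #U := by
  have := card_filter_eq_zero_add_card_filter_eq_one univ (inducedLabel G (insideZeroLabeling U))
    fun v _ => by rw [inducedLabel_insideZeroLabeling hU]; split <;> simp
  rw [← vCount, ← vCount, vCount_zero_insideZeroLabeling hU, card_univ] at this
  omega

end InsideZeroLabeling

section UpperSet

variable {α β : Type*} [Fintype α] [Fintype β] [LinearOrder α] [LinearOrder β]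

noncomputable def coronaUpperSet (a : α) (b : β) : Finset (α ⊕ α × β) :=
  ({i | a ≤ i} : Finset α).disjSum {q | a < q.1 ∨ (q.1 = a ∧ b ≤ q.2)}

variable (G : SimpleGraph α) (H : SimpleGraph β) (a : α) (b : β)

lemma card_coronaUpperSet :
    #(coronaUpperSet a b) = #{i | a ≤ i} + (#{i | a < i} * Fintype.card β + #{x | b ≤ x}) := by
  rw [coronaUpperSet, card_disjSum, ← card_univ, ← card_filter_product_lex _ _ _ _ (mem_univ a)
    (lt_irrefl a), univ_product_univ]

lemma exists_adj_mem_coronaUpperSet :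
    ∀ v ∈ coronaUpperSet a b, ∃ u ∈ coronaUpperSet a b, (corona G H).Adj v u := by
  rintro (i | ⟨i, x⟩) hv <;>
    simp only [coronaUpperSet, inl_mem_disjSum, inr_mem_disjSum, mem_filter, mem_univ,
      true_and] at hv ⊢
  · exact ⟨Sum.inr (i, b), by simpa [eq_comm, le_iff_lt_or_eq] using hv, rfl⟩
  · exact ⟨Sum.inl i, by simpa using hv.elim le_of_lt fun h => h.1.ge, rfl⟩

lemma card_edges_within_coronaUpperSet :
    #{e ∈ (corona G H).edgeFinset | ∀ v ∈ e, v ∈ coronaUpperSet a b} =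
      #{e ∈ G.edgeFinset | ∀ v ∈ e, a ≤ v} + (#{i | a < i} * Fintype.card β + #{x | b ≤ x}) +
        (#{i | a < i} * #H.edgeFinset + #{e ∈ H.edgeFinset | ∀ x ∈ e, b ≤ x}) := by
  rw [card_filter_edgeFinset_corona, ← card_univ, ← card_filter_product_lex _ _ _ _ (mem_univ a)
    (lt_irrefl a), ← card_filter_product_lex _ _ _ _ (mem_univ a) (lt_irrefl a),
    univ_product_univ]
  congr 2
  · refine congrArg card (filter_congr fun e _ => ?_)
    induction e using Sym2.ind
    simp [coronaUpperSet]
  · refine congrArg card (filter_congr fun q _ => ?_)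
    simp only [coronaUpperSet, Sym2.mem_iff, forall_eq_or_imp, forall_eq, inl_mem_disjSum,
      inr_mem_disjSum, mem_filter, mem_univ, true_and, and_iff_right_iff_imp]
    rintro (h | ⟨h, -⟩)
    exacts [h.le, h.ge]
  · refine filter_congr fun ⟨i, e⟩ _ => ?_
    induction e using Sym2.ind
    simp only [Sym2.map_mk, Sym2.mem_iff, coronaUpperSet, forall_eq_or_imp, inr_mem_disjSum,
      mem_filter, mem_univ, true_and, forall_eq]
    tauto

end UpperSet

theorem corona_path_path_odd_even_counts_general (n m : ℕ) (hno : Odd n)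
    (hm : 2 ≤ m) (hme : Even m) :
    ∃ f : Sym2 (Fin n ⊕ Fin n × Fin m) → ℕ,
      (∀ e ∈ (corona (pathGraph n) (pathGraph m)).edgeSet, f e = 0 ∨ f e = 1) ∧
      eCount (corona (pathGraph n) (pathGraph m)) f 0 = n * m - 1 ∧
      eCount (corona (pathGraph n) (pathGraph m)) f 1 = n * m ∧
      vCount (corona (pathGraph n) (pathGraph m)) f 0 = (n * m + n + 1) / 2 ∧
      vCount (corona (pathGraph n) (pathGraph m)) f 1 = (n + n * m - 1) / 2 ∧
      |((vCount (corona (pathGraph n) (pathGraph m)) f 0 : ℤ) +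
          (eCount (corona (pathGraph n) (pathGraph m)) f 0 : ℤ)) -
        ((vCount (corona (pathGraph n) (pathGraph m)) f 1 : ℤ) +
          (eCount (corona (pathGraph n) (pathGraph m)) f 1 : ℤ))| ≤ 1 := by
  obtain ⟨k, hk⟩ := hno
  obtain ⟨h, hh⟩ := hme
  obtain ⟨a, ha⟩ : ∃ a : Fin n, (a : ℕ) = k := ⟨⟨k, by omega⟩, rfl⟩
  obtain ⟨b, hb⟩ : ∃ b : Fin m, (b : ℕ) = h := ⟨⟨h, by omega⟩, rfl⟩
  have hU := exists_adj_mem_coronaUpperSet (pathGraph n) (pathGraph m) a b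
  have hV0 := vCount_zero_insideZeroLabeling hU
  have hV1 := vCount_one_insideZeroLabeling hU
  have hE0 := eCount_zero_insideZeroLabeling (corona (pathGraph n) (pathGraph m))
    (coronaUpperSet a b)
  have hE := eCount_zero_add_eCount_one_insideZeroLabeling (corona (pathGraph n) (pathGraph m))
    (coronaUpperSet a b)
  rw [card_coronaUpperSet] at hV0 hV1
  rw [card_edges_within_coronaUpperSet] at hE0
  rw [card_edgeFinset_corona] at hE
  simp only [filter_le_eq_Ici, filter_lt_eq_Ioi, Fin.card_Ici, Fin.card_Ioi, Fintype.card_fin,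
    card_filter_edgeFinset_pathGraph, card_edgeFinset_pathGraph, Fintype.card_sum,
    Fintype.card_prod, ha, hb] at hV0 hV1 hE0 hE
  have hnm : n * m = 2 * (k * m) + m := by rw [hk]; ring
  have hm₁ : ∀ x, x * (m - 1) + x = x * m := fun x => by
    rw [← Nat.mul_add_one, Nat.sub_add_cancel (by omega)]
  have hkm := hm₁ k
  have hnm' := hm₁ n
  have hk' : n - 1 - k = k := by omega
  rw [hk'] at hV0 hV1 hE0
  refine ⟨insideZeroLabeling (coronaUpperSet a b), fun e _ => insideZeroLabeling_eq_zero_or_one _ e,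
    by omega, by omega, by omega, by omega, ?_⟩
  rw [abs_le]
  omega

/-- For odd `n ≥ 3` and even `m ≥ 2`, the corona graph `P_n ∘ P_m` admits an
edge labeling with `e_f(0) = nm - 1`, `e_f(1) = nm`, `v_f(0) = (nm + n + 1)/2`,
`v_f(1) = (n + nm - 1)/2`; in particular it is total edge product cordial. -/
theorem corona_path_path_odd_even_counts (n m : ℕ) (hn : 3 ≤ n) (hno : Odd n)
    (hm : 2 ≤ m) (hme : Even m) :
    ∃ f : Sym2 (Fin n ⊕ Fin n × Fin m) → ℕ,
      (∀ e ∈ (corona (pathGraph n) (pathGraph m)).edgeSet, f e = 0 ∨ f e = 1) ∧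
      eCount (corona (pathGraph n) (pathGraph m)) f 0 = n * m - 1 ∧
      eCount (corona (pathGraph n) (pathGraph m)) f 1 = n * m ∧
      vCount (corona (pathGraph n) (pathGraph m)) f 0 = (n * m + n + 1) / 2 ∧
      vCount (corona (pathGraph n) (pathGraph m)) f 1 = (n + n * m - 1) / 2 ∧
      |((vCount (corona (pathGraph n) (pathGraph m)) f 0 : ℤ) +
          (eCount (corona (pathGraph n) (pathGraph m)) f 0 : ℤ)) -
        ((vCount (corona (pathGraph n) (pathGraph m)) f 1 : ℤ) +
          (eCount (corona (pathGraph n) (pathGraph m)) f 1 : ℤ))| ≤ 1 :=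
  corona_path_path_odd_even_counts_general n m hno hm hme
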